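/- If w* ∈ ℝ^n is a minimizer of the function Φ(w) = Σ_{j=1}^n ( −ν_j w_j − ∫_{Vor_w(j)} (‖x − y_j‖ − w_j) dμ(x) ), then w* is adapted to (μ, ν), i.e. μ(Vor_{w*}(j)) = ν_j for every j ∈ {1, …, n}. -/

import Mathlib

/-!
Write `w^c(x) = min_k (‖x - y_k‖ - w_k)`. The cells `Vor_w(j)` cover the space and two of them
meet only inside a level set `‖x - y_j‖ - ‖x - y_k‖ = w_j - w_k`, which is Lebesgue-null for
`d ≥ 2`: after an isometry taking `y_j - y_k` to an axis, every line parallel to that axis meets it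
in the roots of a nonzero quadratic, except the axis itself when the level set degenerates to a ray.
Hence `Φ(w) = -∑ ν_j w_j - ∫ w^c dμ`.

Moving only `w_j` to `s` gives weights `w'` with `w^c - w'^c ≤ (s - w_j) 1_{Vor_{w'}(j)}`, so
`Φ(w') - Φ(w) ≤ (s - w_j) (μ(Vor_{w'}(j)) - ν_j)`. At a minimizer this forces
`μ(Vor_{w'}(j)) ≥ ν_j` for `s > w_j` and `≤ ν_j` for `s < w_j`. As `s ↓ w_j` the cells decrease
to `Vor_w(j)`, and as `s ↑ w_j` they increase to `Vor_w(j)` up to the null set where it meets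
another cell.
-/

open MeasureTheory ENNReal

noncomputable section

/-- The additively weighted Voronoi cell of the site `y j` with weights `w`. -/
def Vor {d n : ℕ} (y : Fin n → EuclideanSpace ℝ (Fin d)) (w : Fin n → ℝ) (j : Fin n) :
    Set (EuclideanSpace ℝ (Fin d)) :=
  {x | ∀ k, k ≠ j → ‖x - y j‖ - w j ≤ ‖x - y k‖ - w k}

open Filter Topology Function

open Polynomial in
theorem finite_setOf_sqrt_sub_sqrt_eq {L c r : ℝ} (hr : 0 ≤ r)
    (h : L ^ 2 ≠ c ^ 2 ∨ c ^ 2 * r ≠ 0) :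
    {t : ℝ | √((t - L) ^ 2 + r) - √(t ^ 2 + r) = c}.Finite := by
  set δ := L ^ 2 - c ^ 2
  -- what remains of `√((t - L) ^ 2 + r) = √(t ^ 2 + r) + c` after squaring twice
  set P : ℝ[X] := C (4 * δ) * X ^ 2 + C (-4 * L * δ) * X + C (δ ^ 2 - 4 * c ^ 2 * r)
  have hP : P ≠ 0 := by
    intro hP0
    have h2 := congrArg (coeff · 2) hP0
    have h0 := congrArg (coeff · 0) hP0
    simp only [P, coeff_add, coeff_C_mul, coeff_X_pow, coeff_C, coeff_X, coeff_zero] at h2 h0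
    norm_num at h2 h0
    rcases h with h | h
    · exact h (by linarith)
    · exact h (by rw [h2] at h0; linarith)
  refine (finite_setOfPred_isRoot hP).subset fun t (ht : _ = c) => ?_
  have hX := Real.sq_sqrt (by positivity : 0 ≤ (t - L) ^ 2 + r)
  have hY := Real.sq_sqrt (by positivity : 0 ≤ t ^ 2 + r)
  rw [sub_eq_iff_eq_add] at ht
  have h1 : δ - 2 * L * t = 2 * c * √(t ^ 2 + r) := by
    rw [ht] at hX; linear_combination hY - hX
  have h2 : (δ - 2 * L * t) ^ 2 = 4 * c ^ 2 * (t ^ 2 + r) := by rw [h1, mul_pow, hY]; ring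
  show P.eval t = 0
  simp only [P, eval_add, eval_mul, eval_pow, eval_C, eval_X]
  linear_combination h2

theorem volume_eq_zero_of_ae_volume_fiber_eq_zero {m : ℕ} {S : Set (Fin (m + 1) → ℝ)}
    (hS : MeasurableSet S)
    (h : ∀ᵐ z ∂(volume : Measure (Fin m → ℝ)), volume {t : ℝ | Fin.cons t z ∈ S} = 0) :
    volume S = 0 := by
  have he := measurePreserving_piFinSuccAbove (fun _ : Fin (m + 1) => (volume : Measure ℝ)) 0
  rw [volume_pi, ← he.symm.measure_preimage hS.nullMeasurableSet,
    Measure.prod_apply_symm (he.symm.measurable hS)]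
  refine (lintegral_congr_ae ?_).trans lintegral_zero
  filter_upwards [h] with z hz
  convert hz using 3
  ext t
  simp [MeasurableEquiv.piFinSuccAbove_symm_apply, Fin.consEquiv]

theorem volume_setOf_norm_sub_smul_single_sub_norm_eq {m : ℕ} {L : ℝ} (hL : L ≠ 0) (c : ℝ) :
    volume {u : EuclideanSpace ℝ (Fin (m + 2)) |
      ‖u - L • EuclideanSpace.single 0 1‖ - ‖u‖ = c} = 0 := by
  set S := {u : EuclideanSpace ℝ (Fin (m + 2)) | ‖u - L • EuclideanSpace.single 0 1‖ - ‖u‖ = c}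
  have hS : MeasurableSet S := (isClosed_eq (by fun_prop) continuous_const).measurableSet
  have hpres := PiLp.volume_preserving_toLp (Fin (m + 2))
  rw [← hpres.measure_preimage hS.nullMeasurableSet]
  refine volume_eq_zero_of_ae_volume_fiber_eq_zero (hpres.measurable hS) ?_
  filter_upwards [Measure.ae_ne volume 0] with z hz
  have hr : ∑ i, z i ^ 2 ≠ 0 := by
    obtain ⟨i, hi⟩ := Function.ne_iff.1 hz
    exact (Finset.sum_pos' (fun i _ => sq_nonneg (z i))
      ⟨i, Finset.mem_univ i, pow_two_pos_of_ne_zero hi⟩).ne'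
  have hfiber : {t : ℝ | (Fin.cons t z : Fin (m + 2) → ℝ) ∈ WithLp.toLp 2 ⁻¹' S} =
      {t : ℝ | √((t - L) ^ 2 + ∑ i, z i ^ 2) - √(t ^ 2 + ∑ i, z i ^ 2) = c} := by
    ext t
    simp [S, EuclideanSpace.norm_eq, Fin.sum_univ_succ]
  rw [hfiber]
  refine (finite_setOf_sqrt_sub_sqrt_eq (by positivity)
    (or_iff_not_imp_left.2 fun hc => mul_ne_zero (pow_ne_zero 2 ?_) hr)).measure_zero _
  rintro rfl
  exact hc (by simpa using hL)

theorem volume_setOf_norm_sub_sub_norm_sub_eq {d : ℕ} (hd : 2 ≤ d)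
    {a b : EuclideanSpace ℝ (Fin d)} (hab : a ≠ b) (c : ℝ) :
    volume {x : EuclideanSpace ℝ (Fin d) | ‖x - a‖ - ‖x - b‖ = c} = 0 := by
  obtain ⟨m, rfl⟩ : ∃ m, d = m + 2 := ⟨d - 2, by omega⟩
  set e₀ := ‖a - b‖ • EuclideanSpace.single (0 : Fin (m + 2)) (1 : ℝ)
  set R := Submodule.reflection (ℝ ∙ (a - b - e₀))ᗮ
  have hR : R (a - b) = e₀ := Submodule.reflection_sub (by simp [e₀, norm_smul])
  have hS : MeasurableSet {u : EuclideanSpace ℝ (Fin (m + 2)) | ‖u - e₀‖ - ‖u‖ = c} :=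
    (isClosed_eq (by fun_prop) continuous_const).measurableSet
  have hpre : {x : EuclideanSpace ℝ (Fin (m + 2)) | ‖x - a‖ - ‖x - b‖ = c} =
      (R ∘ fun x => x - b) ⁻¹' {u | ‖u - e₀‖ - ‖u‖ = c} := by
    ext x
    simp only [Set.mem_ofPred_eq, Set.mem_preimage, comp_apply, ← hR, ← map_sub,
      LinearIsometryEquiv.norm_map, sub_sub_sub_cancel_right]
  rw [hpre, (R.measurePreserving.comp (measurePreserving_sub_right volume b)).measure_preimage
    hS.nullMeasurableSet]
  exact volume_setOf_norm_sub_smul_single_sub_norm_eq (norm_sub_pos_iff.2 hab).ne' c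

section CTransform

variable {E ι : Type*} [NormedAddCommGroup E] [Fintype ι] [Nonempty ι] {y : ι → E} {w : ι → ℝ}

def cTransform (y : ι → E) (w : ι → ℝ) (x : E) : ℝ :=
  Finset.univ.inf' Finset.univ_nonempty fun k => ‖x - y k‖ - w k

theorem cTransform_le (x : E) (k : ι) : cTransform y w x ≤ ‖x - y k‖ - w k :=
  Finset.inf'_le _ (Finset.mem_univ k)

theorem exists_cTransform_eq (y : ι → E) (w : ι → ℝ) (x : E) :
    ∃ k, cTransform y w x = ‖x - y k‖ - w k :=
  let ⟨k, _, hk⟩ := Finset.exists_mem_eq_inf' Finset.univ_nonempty fun k => ‖x - y k‖ - w k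
  ⟨k, hk⟩

theorem continuous_cTransform : Continuous (cTransform y w) :=
  Continuous.finset_inf'_apply _ fun _ _ => by fun_prop

variable [MeasurableSpace E] [OpensMeasurableSpace E] {μ : Measure E} [IsFiniteMeasure μ]

theorem integrable_norm_sub_sub (hμ : Integrable (‖·‖) μ) (v : E) (c : ℝ) :
    Integrable (fun x => ‖x - v‖ - c) μ := by
  refine (Integrable.mono' (hμ.add (integrable_const ‖v‖))
    (by fun_prop : Continuous fun x => ‖x - v‖).aestronglyMeasurable
    (.of_forall fun x => ?_)).sub (integrable_const c)
  simpa using norm_sub_le x v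

theorem integrable_cTransform (hμ : Integrable (‖·‖) μ) : Integrable (cTransform y w) μ := by
  refine Integrable.mono' (integrable_finsetSum Finset.univ fun k _ =>
    (integrable_norm_sub_sub hμ (y k) (w k)).norm) continuous_cTransform.aestronglyMeasurable
    (.of_forall fun x => ?_)
  obtain ⟨k, hk⟩ := exists_cTransform_eq y w x
  rw [hk]
  exact Finset.single_le_sum (f := fun k => ‖‖x - y k‖ - w k‖) (fun _ _ => norm_nonneg _)
    (Finset.mem_univ k)

end CTransform

section Voronoi

variable {d n : ℕ} {y : Fin n → EuclideanSpace ℝ (Fin d)} {w : Fin n → ℝ} {j k : Fin n}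
  {x : EuclideanSpace ℝ (Fin d)} {μ : Measure (EuclideanSpace ℝ (Fin d))}

theorem isClosed_vor : IsClosed (Vor y w j) := by
  simp only [Vor, Set.ofPred_forall]
  exact isClosed_iInter fun k => isClosed_iInter fun _ => isClosed_le (by fun_prop) (by fun_prop)

theorem mem_vor_update_iff {s : ℝ} :
    x ∈ Vor y (update w j s) j ↔ ∀ k ≠ j, ‖x - y j‖ - s ≤ ‖x - y k‖ - w k := by
  refine forall₂_congr fun k hkj => ?_
  rw [update_self, update_of_ne hkj]

theorem vor_update_mono : Monotone fun s => Vor y (update w j s) j :=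
  fun _ _ hst _ hx => mem_vor_update_iff.2 fun k hkj => by
    linarith [mem_vor_update_iff.1 hx k hkj]

theorem measure_vor_inter_vor_eq_zero (hd : 2 ≤ d) (hac : μ ≪ volume) (hy : Injective y)
    (hjk : j ≠ k) : μ (Vor y w j ∩ Vor y w k) = 0 := by
  refine measure_mono_null (fun x ⟨hxj, hxk⟩ => ?_)
    (hac (volume_setOf_norm_sub_sub_norm_sub_eq hd (hy.ne hjk) (w j - w k)))
  have := hxj k hjk.symm
  have := hxk j hjk
  simp only [Set.mem_ofPred_eq]
  linarith

variable [NeZero n]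

theorem mem_vor_iff_cTransform_eq : x ∈ Vor y w j ↔ cTransform y w x = ‖x - y j‖ - w j := by
  refine ⟨fun hx => le_antisymm (cTransform_le x j) ?_, fun h k _ => h ▸ cTransform_le x k⟩
  obtain ⟨k, hk⟩ := exists_cTransform_eq y w x
  rcases eq_or_ne k j with rfl | hkj
  · exact hk.ge
  · exact hk ▸ hx k hkj

theorem exists_mem_vor (y : Fin n → EuclideanSpace ℝ (Fin d)) (w : Fin n → ℝ)
    (x : EuclideanSpace ℝ (Fin d)) : ∃ k, x ∈ Vor y w k :=
  let ⟨k, hk⟩ := exists_cTransform_eq y w x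
  ⟨k, mem_vor_iff_cTransform_eq.2 hk⟩

theorem sum_setIntegral_vor_eq_integral_cTransform [IsFiniteMeasure μ] (hd : 2 ≤ d)
    (hac : μ ≪ volume) (hy : Injective y) (hμ : Integrable (‖·‖) μ) :
    ∑ j, ∫ x in Vor y w j, (‖x - y j‖ - w j) ∂μ = ∫ x, cTransform y w x ∂μ := by
  have hcover : (⋃ j, Vor y w j) = Set.univ :=
    Set.iUnion_eq_univ_iff.2 (exists_mem_vor y w)
  rw [← setIntegral_univ, ← hcover, integral_iUnion_ae
    (fun j => isClosed_vor.measurableSet.nullMeasurableSet)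
    (fun j k hjk => measure_vor_inter_vor_eq_zero hd hac hy hjk)
    (integrable_cTransform hμ).integrableOn, tsum_fintype]
  exact Finset.sum_congr rfl fun j _ => setIntegral_congr_fun isClosed_vor.measurableSet
    fun x hx => (mem_vor_iff_cTransform_eq.1 hx).symm

end Voronoi

section Perturbation

variable {d n : ℕ} [NeZero n] {y : Fin n → EuclideanSpace ℝ (Fin d)} {w : Fin n → ℝ} {j : Fin n}
  {μ : Measure (EuclideanSpace ℝ (Fin d))}

theorem cTransform_sub_cTransform_update_le (s : ℝ) (x : EuclideanSpace ℝ (Fin d)) :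
    cTransform y w x - cTransform y (update w j s) x ≤
      (Vor y (update w j s) j).indicator (fun _ => s - w j) x := by
  by_cases hx : x ∈ Vor y (update w j s) j
  · rw [Set.indicator_of_mem hx, mem_vor_iff_cTransform_eq.1 hx, update_self]
    linarith [cTransform_le (y := y) (w := w) x j]
  · obtain ⟨k, hk⟩ := exists_mem_vor y (update w j s) x
    have hkj : k ≠ j := by rintro rfl; exact hx hk
    rw [Set.indicator_of_notMem hx, mem_vor_iff_cTransform_eq.1 hk,
      update_of_ne hkj]
    linarith [cTransform_le (y := y) (w := w) x k]

theorem integral_cTransform_sub_integral_cTransform_update_le [IsFiniteMeasure μ]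
    (hμ : Integrable (‖·‖) μ) (s : ℝ) :
    ∫ x, cTransform y w x ∂μ - ∫ x, cTransform y (update w j s) x ∂μ ≤
      (s - w j) * μ.real (Vor y (update w j s) j) := by
  rw [← integral_sub (integrable_cTransform hμ) (integrable_cTransform hμ), mul_comm,
    ← smul_eq_mul, ← integral_indicator_const _ isClosed_vor.measurableSet]
  exact integral_mono ((integrable_cTransform hμ).sub (integrable_cTransform hμ))
    ((integrable_const _).indicator isClosed_vor.measurableSet)
    (cTransform_sub_cTransform_update_le s)

end Perturbation

theorem sum_mul_update {ι R : Type*} [Fintype ι] [DecidableEq ι] [CommRing R] (a w : ι → R)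
    (j : ι) (s : R) : ∑ k, a k * update w j s k = ∑ k, a k * w k + a j * (s - w j) := by
  rw [← sub_eq_iff_eq_add', ← Finset.sum_sub_distrib, Finset.sum_eq_single j
    (fun k _ hkj => by rw [update_of_ne hkj, sub_self]) (by simp),
    update_self, mul_sub]

section DualObjective

variable {d n : ℕ} {μ : Measure (EuclideanSpace ℝ (Fin d))} {y : Fin n → EuclideanSpace ℝ (Fin d)}
  {a w : Fin n → ℝ} {j : Fin n}

-- the objective `Φ`, with the masses `ν_j` written `a j`
def dualObjective (μ : Measure (EuclideanSpace ℝ (Fin d))) (y : Fin n → EuclideanSpace ℝ (Fin d))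
    (a w : Fin n → ℝ) : ℝ :=
  ∑ j, (-(a j * w j) - ∫ x in Vor y w j, (‖x - y j‖ - w j) ∂μ)

variable [NeZero n] [IsFiniteMeasure μ]

theorem dualObjective_eq (hd : 2 ≤ d) (hac : μ ≪ volume) (hy : Injective y)
    (hμ : Integrable (‖·‖) μ) :
    dualObjective μ y a w = -∑ j, a j * w j - ∫ x, cTransform y w x ∂μ := by
  rw [dualObjective, Finset.sum_sub_distrib, Finset.sum_neg_distrib,
    sum_setIntegral_vor_eq_integral_cTransform hd hac hy hμ]

theorem dualObjective_update_sub_le (hd : 2 ≤ d) (hac : μ ≪ volume) (hy : Injective y)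
    (hμ : Integrable (‖·‖) μ) (s : ℝ) :
    dualObjective μ y a (update w j s) - dualObjective μ y a w ≤
      (s - w j) * (μ.real (Vor y (update w j s) j) - a j) := by
  rw [dualObjective_eq hd hac hy hμ, dualObjective_eq hd hac hy hμ, sum_mul_update]
  linarith [integral_cTransform_sub_integral_cTransform_update_le (y := y) (w := w) (j := j) hμ s]

end DualObjective

section Limits

variable {d n : ℕ} {y : Fin n → EuclideanSpace ℝ (Fin d)} {w : Fin n → ℝ} {j : Fin n}
  {x : EuclideanSpace ℝ (Fin d)} {μ : Measure (EuclideanSpace ℝ (Fin d))} {c : ℝ≥0∞}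

theorem le_measure_vor_of_forall_gt [IsFiniteMeasure μ]
    (h : ∀ s > w j, c ≤ μ (Vor y (update w j s) j)) : c ≤ μ (Vor y w j) := by
  set u : ℕ → ℝ := fun i => w j + 1 / (i + 1)
  have hu : Tendsto u atTop (𝓝 (w j)) := by
    simpa [u] using tendsto_const_nhds.add (tendsto_one_div_add_atTop_nhds_zero_nat (𝕜 := ℝ))
  have hanti : Antitone fun i => Vor y (update w j (u i)) j :=
    vor_update_mono.comp_antitone fun i i' h => by dsimp only [u]; gcongr
  have hsub : (⋂ i, Vor y (update w j (u i)) j) ⊆ Vor y w j := fun x hx k hkj =>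
    le_of_tendsto' (tendsto_const_nhds.sub hu) fun i =>
      mem_vor_update_iff.1 (Set.mem_iInter.1 hx i) k hkj
  calc c ≤ ⨅ i, μ (Vor y (update w j (u i)) j) :=
        le_iInf fun i => h _ (lt_add_of_pos_right _ Nat.one_div_pos_of_nat)
    _ = μ (⋂ i, Vor y (update w j (u i)) j) :=
        (hanti.measure_iInter (fun _ => isClosed_vor.measurableSet.nullMeasurableSet)
          ⟨0, measure_ne_top _ _⟩).symm
    _ ≤ μ (Vor y w j) := measure_mono hsub

variable [NeZero n]

theorem eventually_mem_vor_update (hx : x ∈ Vor y w j) (hk : ∀ k ≠ j, x ∉ Vor y w k) :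
    ∀ᶠ s in 𝓝 (w j), x ∈ Vor y (update w j s) j := by
  simp only [mem_vor_update_iff]
  refine eventually_all.2 fun k => ?_
  rcases eq_or_ne k j with rfl | hkj
  · exact .of_forall fun _ h => absurd rfl h
  have hlt : ‖x - y j‖ - w j < ‖x - y k‖ - w k := by
    rw [← mem_vor_iff_cTransform_eq.1 hx]
    exact (cTransform_le x k).lt_of_ne fun h => hk k hkj (mem_vor_iff_cTransform_eq.2 h)
  filter_upwards [(continuous_const.sub continuous_id).continuousAt.eventually_lt
    continuousAt_const hlt] with s hs _ using hs.le

theorem measure_vor_le_of_forall_lt (hd : 2 ≤ d) (hac : μ ≪ volume) (hy : Injective y)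
    (h : ∀ s < w j, μ (Vor y (update w j s) j) ≤ c) : μ (Vor y w j) ≤ c := by
  set u : ℕ → ℝ := fun i => w j - 1 / (i + 1)
  have hu : Tendsto u atTop (𝓝 (w j)) := by
    simpa [u] using tendsto_const_nhds.sub (tendsto_one_div_add_atTop_nhds_zero_nat (𝕜 := ℝ))
  have hmono : Monotone fun i => Vor y (update w j (u i)) j :=
    vor_update_mono.comp fun i i' h => by dsimp only [u]; gcongr
  -- off the null set where two cells meet, a point of the cell lies in all nearby shrunk cells
  have hae : Vor y w j ≤ᵐ[μ] ⋃ i, Vor y (update w j (u i)) j := by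
    refine ae_le_set.2 (measure_mono_null (fun x ⟨hx, hxu⟩ => ?_) (measure_biUnion_null_iff
      (Set.toFinite {k | k ≠ j}).countable |>.2 fun k hkj =>
        measure_vor_inter_vor_eq_zero (w := w) hd hac hy (Ne.symm hkj)))
    by_contra hxk
    simp only [Set.mem_iUnion, not_exists, Set.mem_inter_iff, not_and] at hxk
    obtain ⟨i, hi⟩ := (hu.eventually (eventually_mem_vor_update hx fun k hkj =>
      hxk k hkj hx)).exists
    exact hxu (Set.mem_iUnion.2 ⟨i, hi⟩)
  calc μ (Vor y w j) ≤ μ (⋃ i, Vor y (update w j (u i)) j) := measure_mono_ae hae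
    _ = ⨆ i, μ (Vor y (update w j (u i)) j) := hmono.measure_iUnion
    _ ≤ c := iSup_le fun i => h _ (sub_lt_self _ Nat.one_div_pos_of_nat)

end Limits

theorem Phi_minimizer_is_adapted_general
    {d n : ℕ} (hd : 2 ≤ d)
    (μ : Measure (EuclideanSpace ℝ (Fin d))) [IsProbabilityMeasure μ]
    (hac : μ ≪ volume)
    (hμint : Integrable (fun x => ‖x‖) μ)
    (y : Fin n → EuclideanSpace ℝ (Fin d)) (hy : Function.Injective y)
    (a : Fin n → ℝ)
    (wstar : Fin n → ℝ)
    (hmin : ∀ w : Fin n → ℝ,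
      ∑ j, (-(a j * wstar j) - ∫ x in Vor y wstar j, (‖x - y j‖ - wstar j) ∂μ) ≤
        ∑ j, (-(a j * w j) - ∫ x in Vor y w j, (‖x - y j‖ - w j) ∂μ)) :
    ∀ j, μ (Vor y wstar j) = ENNReal.ofReal (a j) := by
  intro j
  have : NeZero n := NeZero.of_pos j.pos
  have hvariation (s : ℝ) : 0 ≤ (s - wstar j) * (μ.real (Vor y (update wstar j s) j) - a j) :=
    (sub_nonneg.2 (hmin _)).trans (dualObjective_update_sub_le hd hac hy hμint s)
  refine le_antisymm (measure_vor_le_of_forall_lt hd hac hy fun s hs => ?_)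
    (le_measure_vor_of_forall_gt fun s hs => ?_)
  · rw [← ofReal_measureReal]
    exact ENNReal.ofReal_le_ofReal
      (sub_nonpos.1 (nonpos_of_mul_nonneg_right (hvariation s) (sub_neg.2 hs)))
  · exact ENNReal.ofReal_le_of_le_toReal
      (sub_nonneg.1 (nonneg_of_mul_nonneg_right (hvariation s) (sub_pos.2 hs)))

/-- If `w*` minimizes
`Φ(w) = ∑ⱼ ( -νⱼ wⱼ - ∫_{Vor_w(j)} (‖x - yⱼ‖ - wⱼ) dμ(x) )`, then `w*` is adapted
to `(μ, ν)`, i.e. `μ(Vor_{w*}(j)) = νⱼ` for every `j`. -/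
theorem Phi_minimizer_is_adapted
    {d n : ℕ} (hd : 2 ≤ d)
    (μ : Measure (EuclideanSpace ℝ (Fin d))) [IsProbabilityMeasure μ]
    (hac : μ ≪ volume)
    (hμint : Integrable (fun x => ‖x‖) μ)
    (y : Fin n → EuclideanSpace ℝ (Fin d)) (hy : Function.Injective y)
    (a : Fin n → ℝ) (ha : ∀ j, a j ∈ Set.Ioc (0 : ℝ) 1) (hsum : ∑ j, a j = 1)
    (wstar : Fin n → ℝ)
    (hmin : ∀ w : Fin n → ℝ,
      ∑ j, (-(a j * wstar j) - ∫ x in Vor y wstar j, (‖x - y j‖ - wstar j) ∂μ) ≤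
        ∑ j, (-(a j * w j) - ∫ x in Vor y w j, (‖x - y j‖ - w j) ∂μ)) :
    ∀ j, μ (Vor y wstar j) = ENNReal.ofReal (a j) :=
  Phi_minimizer_is_adapted_general hd μ hac hμint y hy a wstar hmin
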